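/- Let W^{xy} (x,y ∈ {0,1}) be probability distributions on {0,1}^n × {0,1}^n with uniform marginals, and suppose for all Boolean functions f,g : {0,1}^n → {0,1} with |f⁻¹(1)| = k, |g⁻¹(1)| = l we have δ⁻(k,l) ≤ f^T W^{xy} g ≤ δ⁺(k,l) for given functions δ^± : {0,…,2^n}² → ℝ. Then the CHSH value of any protocol using these wirings satisfies |⟨f₀,g₀⟩+⟨f₀,g₁⟩+⟨f₁,g₀⟩-⟨f₁,g₁⟩| ≤ max over k⁰,k¹,l⁰,l¹ ∈ {0,…,2^n} of [2 - (k⁰+l⁰)/2^{n-2} + 4(δ⁺(k⁰,l⁰) + δ⁺(k⁰,l¹) + δ⁺(k¹,l⁰) - δ⁻(k¹,l¹))]. -/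

import Mathlib

/-
Expanding `(1 - 2f(a))(1 - 2g(b))` and summing against a distribution with uniform marginals
`2⁻ⁿ` gives `⟨f,g⟩ = 1 - (k + l)/2ⁿ⁻¹ + 4 fᵀWg`, with `k = |f⁻¹(1)|` and `l = |g⁻¹(1)|`.
In the CHSH combination the `k¹` and `l¹` terms cancel, and bounding the three positive
`fᵀWg` terms by `δ⁺` and the negative one by `δ⁻` bounds the CHSH value from above by one of
the terms of the maximum. Negating `f₀` and `f₁` negates every correlation, so the same bound
holds for minus the CHSH value.
-/

open Finset

/-- The correlation `⟨f,g⟩ = Σ_{a,b} W(a,b)(1-2f(a))(1-2g(b))`. -/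
noncomputable def corr (n : ℕ) (W : (Fin n → Bool) × (Fin n → Bool) → ℝ)
    (f g : (Fin n → Bool) → Bool) : ℝ :=
  ∑ p : (Fin n → Bool) × (Fin n → Bool),
    W p * (1 - 2 * (if f p.1 then (1 : ℝ) else 0)) *
      (1 - 2 * (if g p.2 then (1 : ℝ) else 0))

/-- The quantity `f^T W g = Σ_{a,b} f(a) W(a,b) g(b)`. -/
noncomputable def fWg (n : ℕ) (W : (Fin n → Bool) × (Fin n → Bool) → ℝ)
    (f g : (Fin n → Bool) → Bool) : ℝ :=
  ∑ p : (Fin n → Bool) × (Fin n → Bool),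
    (if f p.1 then (1 : ℝ) else 0) * W p * (if g p.2 then (1 : ℝ) else 0)

section Marginals

variable {α β : Type*} [Fintype α] [Fintype β] (W : α × β → ℝ) {c : ℝ}

theorem sum_eq_mul_card_of_sum_right_eq (hW : ∀ a, ∑ b, W (a, b) = c) :
    ∑ p, W p = c * Fintype.card α := by
  simp [Fintype.sum_prod_type, hW, mul_comm]

theorem sum_ite_mul_eq_of_sum_right_eq (hW : ∀ a, ∑ b, W (a, b) = c) (f : α → Bool) :
    ∑ p, (if f p.1 then (1 : ℝ) else 0) * W p = c * #{a | f a = true} := by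
  rw [Fintype.sum_prod_type' fun a b => (if f a then (1 : ℝ) else 0) * W (a, b)]
  simp only [← mul_sum, hW, sum_boole, mul_comm]

theorem sum_mul_ite_eq_of_sum_left_eq (hW : ∀ b, ∑ a, W (a, b) = c) (g : β → Bool) :
    ∑ p, W p * (if g p.2 then (1 : ℝ) else 0) = c * #{b | g b = true} := by
  rw [Fintype.sum_prod_type_right' fun a b => W (a, b) * (if g b then (1 : ℝ) else 0)]
  simp only [← sum_mul, hW, ← mul_sum, sum_boole]

end Marginals

theorem card_filter_le_two_pow {n : ℕ} (f : (Fin n → Bool) → Bool) :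
    #{a | f a = true} ≤ 2 ^ n := by
  simpa using card_filter_le (univ : Finset (Fin n → Bool)) (fun a => f a = true)

section Correlation

variable {n : ℕ} (W : (Fin n → Bool) × (Fin n → Bool) → ℝ)

theorem corr_eq_sum_sub_add_fWg (f g : (Fin n → Bool) → Bool) :
    corr n W f g = ∑ p, W p - 2 * ∑ p, (if f p.1 then (1 : ℝ) else 0) * W p
      - 2 * ∑ p, W p * (if g p.2 then (1 : ℝ) else 0) + 4 * fWg n W f g := by
  simp only [corr, fWg, mul_sum, ← sum_sub_distrib, ← sum_add_distrib]
  exact sum_congr rfl fun p _ => by ring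

theorem corr_eq_of_uniform_marginals
    (hA : ∀ a, ∑ b, W (a, b) = (2 : ℝ) ^ (-(n : ℤ)))
    (hB : ∀ b, ∑ a, W (a, b) = (2 : ℝ) ^ (-(n : ℤ))) (f g : (Fin n → Bool) → Bool) :
    corr n W f g = 1 - ((#{a | f a = true} : ℝ) + #{b | g b = true}) / 2 ^ ((n : ℤ) - 1)
      + 4 * fWg n W f g := by
  have hmass : (2 : ℝ) ^ (-(n : ℤ)) * Fintype.card (Fin n → Bool) = 1 := by
    simp [zpow_neg]
  have hdouble : 2 * (2 : ℝ) ^ (-(n : ℤ)) = 1 / 2 ^ ((n : ℤ) - 1) := by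
    rw [one_div, ← zpow_neg, ← zpow_one_add₀ two_ne_zero]
    ring_nf
  rw [corr_eq_sum_sub_add_fWg, sum_eq_mul_card_of_sum_right_eq W hA, hmass,
    sum_ite_mul_eq_of_sum_right_eq W hA, sum_mul_ite_eq_of_sum_left_eq W hB, ← mul_assoc,
    ← mul_assoc, hdouble]
  ring

theorem corr_not_left (f g : (Fin n → Bool) → Bool) :
    corr n W (fun a => !f a) g = -corr n W f g := by
  rw [corr, corr, ← sum_neg_distrib]
  refine sum_congr rfl fun p _ => ?_
  cases f p.1 <;> simp <;> ring

end Correlation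

noncomputable def chsh (n : ℕ) (W : Bool → Bool → ((Fin n → Bool) × (Fin n → Bool) → ℝ))
    (f₀ f₁ g₀ g₁ : (Fin n → Bool) → Bool) : ℝ :=
  corr n (W false false) f₀ g₀ + corr n (W false true) f₀ g₁ +
    corr n (W true false) f₁ g₀ - corr n (W true true) f₁ g₁

theorem chsh_not_left (n : ℕ) (W : Bool → Bool → ((Fin n → Bool) × (Fin n → Bool) → ℝ))
    (f₀ f₁ g₀ g₁ : (Fin n → Bool) → Bool) :
    chsh n W (fun a => !f₀ a) (fun a => !f₁ a) g₀ g₁ = -chsh n W f₀ f₁ g₀ g₁ := by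
  simp only [chsh, corr_not_left]
  ring

noncomputable def deltaBound (n : ℕ) (δp δm : ℕ → ℕ → ℝ) (k₀ k₁ l₀ l₁ : ℕ) : ℝ :=
  2 - ((k₀ : ℝ) + (l₀ : ℝ)) / (2 : ℝ) ^ ((n : ℤ) - 2) +
    4 * (δp k₀ l₀ + δp k₀ l₁ + δp k₁ l₀ - δm k₁ l₁)

theorem chsh_le_deltaBound (n : ℕ) (W : Bool → Bool → ((Fin n → Bool) × (Fin n → Bool) → ℝ))
    (hmargA : ∀ x y a, ∑ b : Fin n → Bool, W x y (a, b) = (2 : ℝ) ^ (-(n : ℤ)))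
    (hmargB : ∀ x y b, ∑ a : Fin n → Bool, W x y (a, b) = (2 : ℝ) ^ (-(n : ℤ)))
    (δp δm : ℕ → ℕ → ℝ)
    (hbound : ∀ (x y : Bool) (f g : (Fin n → Bool) → Bool),
      δm #{a | f a = true} #{b | g b = true} ≤ fWg n (W x y) f g ∧
        fWg n (W x y) f g ≤ δp #{a | f a = true} #{b | g b = true})
    (f₀ f₁ g₀ g₁ : (Fin n → Bool) → Bool) :
    chsh n W f₀ f₁ g₀ g₁ ≤ deltaBound n δp δm #{a | f₀ a = true} #{a | f₁ a = true}
      #{b | g₀ b = true} #{b | g₁ b = true} := by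
  have hpow : (2 : ℝ) ^ ((n : ℤ) - 1) = 2 * 2 ^ ((n : ℤ) - 2) := by
    rw [← zpow_one_add₀ two_ne_zero]
    ring_nf
  have hchsh : chsh n W f₀ f₁ g₀ g₁ =
      2 - ((#{a | f₀ a = true} : ℝ) + #{b | g₀ b = true}) / 2 ^ ((n : ℤ) - 2) +
        4 * (fWg n (W false false) f₀ g₀ + fWg n (W false true) f₀ g₁ +
          fWg n (W true false) f₁ g₀ - fWg n (W true true) f₁ g₁) := by
    simp only [chsh, corr_eq_of_uniform_marginals _ (hmargA _ _) (hmargB _ _), hpow]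
    ring
  rw [hchsh, deltaBound]
  linarith [(hbound false false f₀ g₀).2, (hbound false true f₀ g₁).2,
    (hbound true false f₁ g₀).2, (hbound true true f₁ g₁).1]

theorem deltaBound_le_iSup (n : ℕ) (δp δm : ℕ → ℕ → ℝ) {k₀ k₁ l₀ l₁ : ℕ}
    (hk₀ : k₀ ≤ 2 ^ n) (hk₁ : k₁ ≤ 2 ^ n) (hl₀ : l₀ ≤ 2 ^ n) (hl₁ : l₁ ≤ 2 ^ n) :
    deltaBound n δp δm k₀ k₁ l₀ l₁ ≤
      ⨆ q : Fin (2 ^ n + 1) × Fin (2 ^ n + 1) × Fin (2 ^ n + 1) × Fin (2 ^ n + 1),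
        deltaBound n δp δm q.1 q.2.1 q.2.2.1 q.2.2.2 :=
  le_ciSup (f := fun q : Fin (2 ^ n + 1) × Fin (2 ^ n + 1) × Fin (2 ^ n + 1) × Fin (2 ^ n + 1) =>
      deltaBound n δp δm q.1 q.2.1 q.2.2.1 q.2.2.2)
    (Set.finite_range _).bddAbove
    (⟨k₀, Nat.lt_succ_of_le hk₀⟩, ⟨k₁, Nat.lt_succ_of_le hk₁⟩, ⟨l₀, Nat.lt_succ_of_le hl₀⟩,
      ⟨l₁, Nat.lt_succ_of_le hl₁⟩)

theorem chsh_le_delta_bound_general (n : ℕ)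
    (W : Bool → Bool → ((Fin n → Bool) × (Fin n → Bool) → ℝ))
    (hmargA : ∀ x y a, ∑ b : Fin n → Bool, W x y (a, b) = (2 : ℝ) ^ (-(n : ℤ)))
    (hmargB : ∀ x y b, ∑ a : Fin n → Bool, W x y (a, b) = (2 : ℝ) ^ (-(n : ℤ)))
    (δp δm : ℕ → ℕ → ℝ)
    (hbound : ∀ (x y : Bool) (f g : (Fin n → Bool) → Bool),
      δm ((univ.filter fun a => f a = true).card) ((univ.filter fun b => g b = true).card)
          ≤ fWg n (W x y) f g ∧
        fWg n (W x y) f g ≤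
          δp ((univ.filter fun a => f a = true).card) ((univ.filter fun b => g b = true).card))
    (f₀ f₁ g₀ g₁ : (Fin n → Bool) → Bool) :
    |corr n (W false false) f₀ g₀ + corr n (W false true) f₀ g₁ +
        corr n (W true false) f₁ g₀ - corr n (W true true) f₁ g₁|
      ≤ ⨆ q : Fin (2 ^ n + 1) × Fin (2 ^ n + 1) × Fin (2 ^ n + 1) × Fin (2 ^ n + 1),
          (2 - (((q.1 : ℕ) : ℝ) + ((q.2.2.1 : ℕ) : ℝ)) / (2 : ℝ) ^ ((n : ℤ) - 2) +
            4 * (δp (q.1 : ℕ) (q.2.2.1 : ℕ) + δp (q.1 : ℕ) (q.2.2.2 : ℕ) +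
              δp (q.2.1 : ℕ) (q.2.2.1 : ℕ) - δm (q.2.1 : ℕ) (q.2.2.2 : ℕ))) := by
  have hle : ∀ f₀ f₁ : (Fin n → Bool) → Bool, chsh n W f₀ f₁ g₀ g₁ ≤
      ⨆ q : Fin (2 ^ n + 1) × Fin (2 ^ n + 1) × Fin (2 ^ n + 1) × Fin (2 ^ n + 1),
        deltaBound n δp δm q.1 q.2.1 q.2.2.1 q.2.2.2 := fun f₀ f₁ =>
    (chsh_le_deltaBound n W hmargA hmargB δp δm hbound f₀ f₁ g₀ g₁).trans
      (deltaBound_le_iSup n δp δm (card_filter_le_two_pow f₀) (card_filter_le_two_pow f₁)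
        (card_filter_le_two_pow g₀) (card_filter_le_two_pow g₁))
  have hneg := hle (fun a => !f₀ a) (fun a => !f₁ a)
  rw [chsh_not_left] at hneg
  exact abs_le.2 ⟨neg_le.1 hneg, hle f₀ f₁⟩

/-- if the wiring distributions `W^{xy}` have uniform marginals and all
quantities `f^T W^{xy} g` are bounded between `δ⁻(k,l)` and `δ⁺(k,l)` (`k = |f⁻¹(1)|`,
`l = |g⁻¹(1)|`), then the CHSH value of any protocol using these wirings is at most
`max_{k⁰,k¹,l⁰,l¹} [2 - (k⁰+l⁰)/2^{n-2} + 4(δ⁺(k⁰,l⁰)+δ⁺(k⁰,l¹)+δ⁺(k¹,l⁰)-δ⁻(k¹,l¹))]`. -/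
theorem chsh_le_delta_bound (n : ℕ)
    (W : Bool → Bool → ((Fin n → Bool) × (Fin n → Bool) → ℝ))
    (hW0 : ∀ x y p, 0 ≤ W x y p)
    (hmargA : ∀ x y a, ∑ b : Fin n → Bool, W x y (a, b) = (2 : ℝ) ^ (-(n : ℤ)))
    (hmargB : ∀ x y b, ∑ a : Fin n → Bool, W x y (a, b) = (2 : ℝ) ^ (-(n : ℤ)))
    (δp δm : ℕ → ℕ → ℝ)
    (hbound : ∀ (x y : Bool) (f g : (Fin n → Bool) → Bool),
      δm ((univ.filter fun a => f a = true).card) ((univ.filter fun b => g b = true).card)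
          ≤ fWg n (W x y) f g ∧
        fWg n (W x y) f g ≤
          δp ((univ.filter fun a => f a = true).card) ((univ.filter fun b => g b = true).card))
    (f₀ f₁ g₀ g₁ : (Fin n → Bool) → Bool) :
    |corr n (W false false) f₀ g₀ + corr n (W false true) f₀ g₁ +
        corr n (W true false) f₁ g₀ - corr n (W true true) f₁ g₁|
      ≤ ⨆ q : Fin (2 ^ n + 1) × Fin (2 ^ n + 1) × Fin (2 ^ n + 1) × Fin (2 ^ n + 1),
          (2 - (((q.1 : ℕ) : ℝ) + ((q.2.2.1 : ℕ) : ℝ)) / (2 : ℝ) ^ ((n : ℤ) - 2) +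
            4 * (δp (q.1 : ℕ) (q.2.2.1 : ℕ) + δp (q.1 : ℕ) (q.2.2.2 : ℕ) +
              δp (q.2.1 : ℕ) (q.2.2.1 : ℕ) - δm (q.2.1 : ℕ) (q.2.2.2 : ℕ))) :=
  chsh_le_delta_bound_general n W hmargA hmargB δp δm hbound f₀ f₁ g₀ g₁
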